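/- arXiv:math/0503150 — 2 statements merged into one kernel-verified Lean document; each statement's English description precedes it below -/
import Mathlib

section
/- Let (V, g, J, ω) be a Hermitian vector space of real dimension 6 with Kähler form ω, and let ψ be a real 3-form of type (3,0)+(0,3). Then for all X ∈ V: ω ∧ ι_X ψ = -(JX)♭ ∧ ψ, where (JX)♭ = g(JX, ·). -/
/-!
The 5-form `ω ∧ ψ` has type `(4,1) + (1,4)`, so it vanishes on a space of complex dimension 3.
Contracting `ω ∧ ψ = 0` with `X` gives `ω ∧ ι_X ψ + ι_X ω ∧ ψ = 0`, and `ι_X ω = (JX)♭`.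
To see the vanishing, write `ψ = Re Θ` with `Θ` complex trilinear and `ω(u, ·) = Re f_u` with
`f_u` complex linear: then `ω ∧ Θ` is a combination of the 4-forms `f_u ∧ Θ`, which vanish
because `Θ` is a multiple of the determinant.
-/

open scoped RealInnerProductSpace

/-- The wedge product of a 1-form with a 3-form (shuffle/determinant convention),
written pointwise. -/
def wedge13 {V : Type*} [AddCommGroup V] [Module ℝ V]
    (η : V → ℝ) (ψ : V [⋀^Fin 3]→ₗ[ℝ] ℝ) : V → V → V → V → ℝ :=
  fun a b c d =>
    η a * ψ ![b, c, d] - η b * ψ ![a, c, d] + η c * ψ ![a, b, d] - η d * ψ ![a, b, c]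

/-- The wedge product of two 2-forms (shuffle/determinant convention), pointwise. -/
def wedge22 {V : Type*} [AddCommGroup V] [Module ℝ V]
    (α β : V → V → ℝ) : V → V → V → V → ℝ :=
  fun a b c d =>
    α a b * β c d - α a c * β b d + α a d * β b c
      + α b c * β a d - α b d * β a c + α c d * β a b

open Function

def wedge23 {R V : Type*} [CommRing R] (α : V → V → R) (β : (Fin 3 → V) → R) :
    V → V → V → V → V → R :=
  fun v₀ v₁ v₂ v₃ v₄ =>
    α v₀ v₁ * β ![v₂, v₃, v₄] - α v₀ v₂ * β ![v₁, v₃, v₄] + α v₀ v₃ * β ![v₁, v₂, v₄]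
      - α v₀ v₄ * β ![v₁, v₂, v₃] + α v₁ v₂ * β ![v₀, v₃, v₄] - α v₁ v₃ * β ![v₀, v₂, v₄]
      + α v₁ v₄ * β ![v₀, v₂, v₃] + α v₂ v₃ * β ![v₀, v₁, v₄] - α v₂ v₄ * β ![v₀, v₁, v₃]
      + α v₃ v₄ * β ![v₀, v₁, v₂]

theorem wedge23_eq_wedge13_add_wedge22 {V : Type*} [AddCommGroup V] [Module ℝ V]
    (α : V → V → ℝ) (ψ : V [⋀^Fin 3]→ₗ[ℝ] ℝ) (X a b c d : V) :
    wedge23 α ψ X a b c d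
      = wedge13 (α X) ψ a b c d + wedge22 α (fun u v => ψ ![X, u, v]) a b c d := by
  simp only [wedge23, wedge13, wedge22]
  ring

namespace AlternatingMap

section Fin3

variable {R M N : Type*} [CommRing R] [AddCommGroup M] [Module R M] [AddCommGroup N]
  [Module R N] (f : M [⋀^Fin 3]→ₗ[R] N)

theorem map_vecCons_swap₀₂ (a b c : M) : f ![c, b, a] = -f ![a, b, c] := by
  rw [← f.map_swap ![a, b, c] (i := 0) (j := 2) (by decide)]
  congr 1
  funext k
  fin_cases k <;> rfl

theorem map_vecCons_swap₁₂ (a b c : M) : f ![a, c, b] = -f ![a, b, c] := by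
  rw [← f.map_swap ![a, b, c] (i := 1) (j := 2) (by decide)]
  congr 1
  funext k
  fin_cases k <;> rfl

end Fin3

theorem smul_sub_smul_add_smul_sub_smul_eq_zero {K V : Type*} [Field K] [AddCommGroup V]
    [Module K V] (hV : Module.finrank K V = 3) (Θ : V [⋀^Fin 3]→ₗ[K] K) (a b c d : V) :
    Θ ![b, c, d] • a - Θ ![a, c, d] • b + Θ ![a, b, d] • c - Θ ![a, b, c] • d = 0 := by
  have : Module.Finite K V := Module.finite_of_finrank_eq_succ hV
  let e := Module.finBasisOfFinrankEq K V hV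
  rw [Θ.eq_smul_basis_det e, e.ext_elem_iff]
  intro k
  simp only [smul_apply, e.det_apply, Matrix.det_fin_three, Module.Basis.toMatrix_apply, map_sub,
    map_add, map_smul, Finsupp.sub_apply, Finsupp.add_apply, Finsupp.smul_apply, smul_eq_mul]
  -- each coordinate is a 4 × 4 determinant with a repeated row
  fin_cases k <;> simp <;> ring

end AlternatingMap

theorem Complex.smul_eq_re_smul_add_im_smul_I_smul {W : Type*} [AddCommGroup W] [Module ℂ W]
    [Module ℝ W] [IsScalarTower ℝ ℂ W] (c : ℂ) (y : W) :
    c • y = c.re • y + c.im • Complex.I • y := by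
  rw [← algebraMap_smul ℂ c.re, ← algebraMap_smul ℂ c.im, Complex.coe_algebraMap, smul_smul,
    ← add_smul, Complex.re_add_im]

theorem LinearMap.exists_complexModule_of_comp_self_eq_neg_id {V : Type*} [AddCommGroup V]
    [Module ℝ V] {J : V →ₗ[ℝ] V} (hJ : J ∘ₗ J = -LinearMap.id) :
    ∃ (_ : Module ℂ V) (_ : IsScalarTower ℝ ℂ V), ∀ v : V, Complex.I • v = J v :=
  let φ := Complex.liftAux (J : Module.End ℝ V) hJ
  letI : Module ℂ V := Module.compHom V φ.toRingHom
  ⟨this, ⟨fun r z v => show φ (r • z) v = r • φ z v by rw [map_smul]; rfl⟩,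
    fun v => show φ Complex.I v = J v by rw [Complex.liftAux_apply_I]⟩

section ComplexVectorSpace

variable {V : Type*} [AddCommGroup V] [Module ℂ V] [Module ℝ V]

namespace AlternatingMap

theorem map_update_I_smul_self_eq_neg {ψ : V [⋀^Fin 3]→ₗ[ℝ] ℝ}
    (hψ : ∀ X Y Z : V, ψ ![Complex.I • X, Complex.I • Y, Z] = -ψ ![X, Y, Z])
    (w : Fin 3 → V) (i : Fin 3) : ψ (update (Complex.I • w) i (w i)) = -ψ w := by
  obtain ⟨a, b, c, rfl⟩ : ∃ a b c, w = ![a, b, c] :=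
    ⟨w 0, w 1, w 2, by ext k; fin_cases k <;> rfl⟩
  fin_cases i
  · calc ψ (update (Complex.I • ![a, b, c]) 0 a) = ψ ![a, Complex.I • b, Complex.I • c] :=
          congrArg ψ (by funext k; fin_cases k <;> rfl)
      _ = -ψ ![a, b, c] := by
          rw [ψ.map_vecCons_swap₀₂, hψ, ψ.map_vecCons_swap₀₂ c, neg_neg]
  · calc ψ (update (Complex.I • ![a, b, c]) 1 b) = ψ ![Complex.I • a, b, Complex.I • c] :=
          congrArg ψ (by funext k; fin_cases k <;> rfl)
      _ = -ψ ![a, b, c] := by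
          rw [ψ.map_vecCons_swap₁₂, hψ, ψ.map_vecCons_swap₁₂ a, neg_neg]
  · exact (congrArg ψ (by funext k; fin_cases k <;> rfl)).trans (hψ a b c)

variable [IsScalarTower ℝ ℂ V]

def complexOfMapUpdateISMul {ι W : Type*} [DecidableEq ι] [AddCommGroup W] [Module ℂ W]
    [Module ℝ W] [IsScalarTower ℝ ℂ W] (f : V [⋀^ι]→ₗ[ℝ] W)
    (hf : ∀ (m : ι → V) (i : ι) (x : V),
      f (update m i (Complex.I • x)) = Complex.I • f (update m i x)) :
    V [⋀^ι]→ₗ[ℂ] W where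
  toMultilinearMap := MultilinearMap.mk' f (fun m i x y => f.map_update_add m i x y)
    fun m i c x => by
      rw [Complex.smul_eq_re_smul_add_im_smul_I_smul c x, f.map_update_add, f.map_update_smul,
        f.map_update_smul, hf, ← Complex.smul_eq_re_smul_add_im_smul_I_smul]
  map_eq_zero_of_eq' := f.map_eq_zero_of_eq'

noncomputable def complexify (ψ : V [⋀^Fin 3]→ₗ[ℝ] ℝ)
    (hψ : ∀ X Y Z : V, ψ ![Complex.I • X, Complex.I • Y, Z] = -ψ ![X, Y, Z]) :
    V [⋀^Fin 3]→ₗ[ℂ] ℂ :=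
  complexOfMapUpdateISMul
    ((Algebra.linearMap ℝ ℂ).compAlternatingMap ψ + Complex.I •
      (Algebra.linearMap ℝ ℂ).compAlternatingMap
        (ψ.compLinearMap (DistribSMul.toLinearMap ℝ V Complex.I)))
    fun m i x => by
      have h₁ := map_update_I_smul_self_eq_neg hψ (update m i x) i
      have h₂ := map_update_I_smul_self_eq_neg hψ (update m i (Complex.I • x)) i
      simp only [← update_smul, update_idem, update_self, smul_smul, Complex.I_mul_I,
        neg_one_smul] at h₁ h₂
      change (ψ _ : ℂ) + Complex.I * ψ (Complex.I • _) =
        Complex.I * ((ψ _ : ℂ) + Complex.I * ψ (Complex.I • _))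
      rw [← update_smul, ← update_smul, smul_smul, Complex.I_mul_I, neg_one_smul,
        ψ.map_update_neg, h₁, h₂]
      push_cast
      linear_combination (ψ (update m i (Complex.I • x)) : ℂ) * Complex.I_mul_I

theorem re_complexify_apply (ψ : V [⋀^Fin 3]→ₗ[ℝ] ℝ)
    (hψ : ∀ X Y Z : V, ψ ![Complex.I • X, Complex.I • Y, Z] = -ψ ![X, Y, Z]) (m : Fin 3 → V) :
    (complexify ψ hψ m).re = ψ m := by
  change ((ψ m : ℂ) + Complex.I * ψ (Complex.I • m)).re = ψ m
  simp

end AlternatingMap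

variable [IsScalarTower ℝ ℂ V]

theorem wedge23_ofReal_eq_zero (hV : Module.finrank ℂ V = 3) (ω : V →ₗ[ℝ] V →ₗ[ℝ] ℝ)
    (hω : ∀ u v, ω u v = -ω v u) (hωI : ∀ u v, ω (Complex.I • u) (Complex.I • v) = ω u v)
    (Θ : V [⋀^Fin 3]→ₗ[ℂ] ℂ) (v₀ v₁ v₂ v₃ v₄ : V) :
    wedge23 (fun u v => (ω u v : ℂ)) Θ v₀ v₁ v₂ v₃ v₄ = 0 := by
  let f (u : V) : Module.Dual ℂ V := Module.Dual.extendRCLike (ω u)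
  have hf (u v : V) : (ω u v : ℂ) = (f u v - f v u) / 2 := by
    have : ω v (Complex.I • u) = ω u (Complex.I • v) := by
      rw [hω, ← hωI, smul_smul, Complex.I_mul_I, neg_one_smul, map_neg, LinearMap.neg_apply,
        neg_neg]
    simp only [f, Module.Dual.extendRCLike_apply, RCLike.I_to_complex, Complex.coe_algebraMap,
      hω v u, this]
    push_cast
    ring
  have cramer (u a b c d : V) :
      Θ ![b, c, d] * f u a - Θ ![a, c, d] * f u b + Θ ![a, b, d] * f u c
        - Θ ![a, b, c] * f u d = 0 := by
    simpa using congrArg (f u) (Θ.smul_sub_smul_add_smul_sub_smul_eq_zero hV a b c d)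
  simp only [wedge23, hf]
  linear_combination (cramer v₀ v₁ v₂ v₃ v₄ - cramer v₁ v₀ v₂ v₃ v₄ + cramer v₂ v₀ v₁ v₃ v₄
    - cramer v₃ v₀ v₁ v₂ v₄ + cramer v₄ v₀ v₁ v₂ v₃) / 2

theorem wedge23_eq_zero (hV : Module.finrank ℂ V = 3) (ω : V →ₗ[ℝ] V →ₗ[ℝ] ℝ)
    (hω : ∀ u v, ω u v = -ω v u) (hωI : ∀ u v, ω (Complex.I • u) (Complex.I • v) = ω u v)
    (ψ : V [⋀^Fin 3]→ₗ[ℝ] ℝ)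
    (hψ : ∀ X Y Z : V, ψ ![Complex.I • X, Complex.I • Y, Z] = -ψ ![X, Y, Z])
    (v₀ v₁ v₂ v₃ v₄ : V) :
    wedge23 (fun u v => ω u v) ψ v₀ v₁ v₂ v₃ v₄ = 0 := by
  have h := congrArg Complex.re
    (wedge23_ofReal_eq_zero hV ω hω hωI (ψ.complexify hψ) v₀ v₁ v₂ v₃ v₄)
  simpa [wedge23, AlternatingMap.re_complexify_apply] using h

end ComplexVectorSpace

/-- For a real 3-form `ψ` of type `(3,0)+(0,3)` on a Hermitian vector space of real
dimension 6 with Kähler form `ω(X,Y) = ⟪JX, Y⟫`, one has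
`ω ∧ ι_X ψ = -(JX)♭ ∧ ψ` for every `X`. -/
theorem stmt13 (V : Type*) [NormedAddCommGroup V] [InnerProductSpace ℝ V]
    (hdim : Module.finrank ℝ V = 6)
    (J : V →ₗ[ℝ] V) (hJ2 : J ∘ₗ J = -LinearMap.id)
    (hJo : ∀ x y : V, ⟪J x, J y⟫ = ⟪x, y⟫)
    (ψ : V [⋀^Fin 3]→ₗ[ℝ] ℝ)
    (hψ : ∀ X Y Z : V, ψ ![J X, J Y, Z] = -ψ ![X, Y, Z]) :
    ∀ X a b c d : V,
      wedge22 (fun u v => ⟪J u, v⟫) (fun u v => ψ ![X, u, v]) a b c d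
        = -wedge13 (fun u => ⟪J X, u⟫) ψ a b c d := by
  obtain ⟨_, _, hI⟩ := J.exists_complexModule_of_comp_self_eq_neg_id hJ2
  have hV : Module.finrank ℂ V = 3 := by
    have := Module.finrank_mul_finrank ℝ ℂ V
    rw [Complex.finrank_real_complex, hdim] at this
    omega
  have hJJ (u : V) : J (J u) = -u := by simpa using LinearMap.congr_fun hJ2 u
  have hω (u v : V) : ⟪J u, v⟫ = -⟪J v, u⟫ := by
    rw [← hJo, hJJ, inner_neg_left, real_inner_comm]
  intro X a b c d
  have h : wedge23 (fun u v => ⟪J u, v⟫) ψ X a b c d = 0 :=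
    wedge23_eq_zero hV ((innerₗ V).comp J) hω (fun u v => by simpa [hI] using hJo (J u) v) ψ
      (by simpa only [hI] using hψ) X a b c d
  rw [wedge23_eq_wedge13_add_wedge22] at h
  linarith
end

section
/- Let M be a 6-dimensional manifold with an almost Hermitian structure of type W₁ ⊕ W₂ ⊕ W₄, i.e. dω = ψ + ω ∧ θ where ψ is the (3,0)+(0,3)-component of dω and θ is the Lee form. Then the (2,2)-component of dψ vanishes if and only if the (1,1)-component of dθ vanishes. -/
/-- On a 6-dimensional almost Hermitian manifold of type `W₁ ⊕ W₂ ⊕ W₄`, i.e. with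
`dω = ψ + ω ∧ θ`, the `(2,2)`-component of `dψ` vanishes iff the `(1,1)`-component of
`dθ` vanishes.  (Abstract formulation of the algebra of forms: `P22` and `P11` are the
type projections onto `(2,2)`-parts of 4-forms and `(1,1)`-parts of 2-forms; `hP22ψθ`
records that `ψ ∧ θ` has type `(3,1)+(1,3)`, `hP22ω` that wedging with `ω` sends the
`(1,1)`-part to the `(2,2)`-part, and `hinj` is the injectivity of wedging with `ω` on
real `(1,1)`-forms in dimension 6.) -/
theorem stmt17 (Ω : Type*) [Ring Ω] [Algebra ℝ Ω]
    (d P22 P11 : Ω →ₗ[ℝ] Ω) (ω ψ θ : Ω)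
    (hdω : d ω = ψ + ω * θ)
    (hdd : d (d ω) = 0)
    (hL : d (ω * θ) = d ω * θ + ω * d θ)
    (hθθ : θ * θ = 0)
    (hP22ψθ : P22 (ψ * θ) = 0)
    (hP22ω : ∀ β, P22 (ω * β) = ω * P11 β)
    (hP11 : ∀ β, P11 (P11 β) = P11 β)
    (hinj : ∀ β, P11 β = β → ω * β = 0 → β = 0) :
    P22 (d ψ) = 0 ↔ P11 (d θ) = 0 := by
  have key : P22 (d ψ) + ω * P11 (d θ) = 0 := by
    have h1 : d ψ + ψ * θ + ω * d θ = 0 := by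
      have : d (d ω) = d ψ + (ψ * θ + ω * (θ * θ) + ω * d θ) := by
        rw [hdω, map_add, hL, hdω, add_mul, mul_assoc]
      rw [this, hθθ, mul_zero, add_zero, ← add_assoc] at hdd
      exact hdd
    have := congrArg P22 h1
    simpa [map_add, hP22ψθ, hP22ω] using this
  constructor
  · intro h
    refine hinj _ (hP11 _) ?_
    rw [h, zero_add] at key
    exact key
  · intro h
    rw [h, mul_zero, add_zero] at key
    exact key
end
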